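/- arXiv:1801.01318 — 2 statements merged into one kernel-verified Lean document; each statement's English description precedes it below -/
import Mathlib

section
/- Let A be an integral domain which is an ℝ-algebra. Let I₀, J₀ be ℝ-linearly independent imaginary units, let f = f₀ + f₁·ι(I₀) and h = h₀ + h₁·ι(J₀) with f₀, f₁, h₀, h₁ ∈ A and f₁ ≠ 0, h₁ ≠ 0, and let K₀ be an imaginary unit. Then f * h is K₀-sliced if and only if there exist a, b ∈ ℝ and ε ∈ ℝ \ {0} such that K₀ = aI₀ + bJ₀ + ε·(I₀J₀ − J₀I₀)/2 (computed in Quaternion ℝ), ε·f₀ = b·f₁ and ε·h₀ = a·h₁ in A. (Theorem 4.3.) -/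
open Quaternion

/-- The componentwise extension `ι : ℍ[ℝ] → ℍ[A]` of `algebraMap ℝ A`. -/
noncomputable def qmap {A : Type*} [CommRing A] [Algebra ℝ A] (q : Quaternion ℝ) :
    Quaternion A :=
  ⟨algebraMap ℝ A q.re, algebraMap ℝ A q.imI, algebraMap ℝ A q.imJ, algebraMap ℝ A q.imK⟩

/-- An imaginary unit: a real quaternion with zero real part squaring to `-1`. -/
def IsImaginaryUnit (I : Quaternion ℝ) : Prop := I.re = 0 ∧ I ^ 2 = -1

/-- `q` is `I`-sliced if `q = a + b·ι(I)` for some `a, b ∈ A`. -/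
noncomputable def IsSliced {A : Type*} [CommRing A] [Algebra ℝ A]
    (I : Quaternion ℝ) (q : Quaternion A) : Prop :=
  ∃ a b : A, q = (a : Quaternion A) + (b : Quaternion A) * qmap I

/-! For pure quaternions `p, q` the product splits as `p * q = (p * q).re + (p * q).im` with
`(p * q).im = (p * q - q * p) / 2`, so the vector part of `f * h` is
`f₁h₀ ι(I₀) + f₀h₁ ι(J₀) + f₁h₁ ι((I₀ * J₀).im)`. For independent `I₀, J₀` the three quaternions
`I₀, J₀, (I₀ * J₀).im` span the pure quaternions; `(I₀ * J₀).im` is orthogonal to `I₀, J₀`, and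
`|I₀|²|J₀|² - ⟨I₀, J₀⟩² = |(I₀ * J₀).im|²` is a nonzero real, hence a unit of `A`, so the images of
the three under `ι` stay `A`-linearly independent. Writing
`K₀ = a I₀ + b J₀ + ε (I₀ * J₀).im`, the product is `K₀`-sliced iff `(f₁h₀, f₀h₁, f₁h₁) = c (a, b, ε)`
for some `c ∈ A`; as `f₁h₁ ≠ 0` in the domain `A`, this means `ε ≠ 0`, `ε f₀ = b f₁`, `ε h₀ = a h₁`. -/

open scoped RealInnerProductSpace

namespace Quaternion

variable {p q r : ℍ}

theorem inv_two_smul_commutator_eq_im_mul (hp : p.re = 0) (hq : q.re = 0) :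
    (2 : ℝ)⁻¹ • (p * q - q * p) = (p * q).im := by
  ext <;> simp only [re_smul, imI_smul, imJ_smul, imK_smul, smul_eq_mul, re_sub, imI_sub, imJ_sub,
    imK_sub, re_mul, imI_mul, imJ_mul, imK_mul, re_im, imI_im, imJ_im, imK_im, hp, hq] <;> ring

theorem im_mul_ne_zero_of_linearIndependent (hp : p.re = 0) (hpq : LinearIndependent ℝ ![p, q]) :
    (p * q).im ≠ 0 := by
  intro him
  have hmul : p * q = ((p * q).re : ℍ) := by rw [← re_add_im (p * q), him, add_zero, re_coe]
  have hsq : p * p = (-normSq p : ℝ) := by rw [← pow_two, sq_eq_neg_normSq.mpr hp, coe_neg]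
  have hcomb : (p * q).re • p + normSq p • q = 0 := by
    have h := congrArg (p * ·) hmul
    simp only [← mul_assoc, hsq, coe_mul_eq_smul, mul_coe_eq_smul, neg_smul] at h
    rw [← h]
    abel
  have hp0 : normSq p = 0 := (LinearIndependent.pair_iff.mp hpq _ _ hcomb).2
  exact hpq.ne_zero 0 (normSq_eq_zero.mp hp0)

theorem inner_im_mul_left (hp : p.re = 0) (hq : q.re = 0) : ⟪(p * q).im, p⟫ = 0 := by
  simp only [inner_def, re_mul, imI_mul, imJ_mul, imK_mul, re_star, imI_star, imJ_star, imK_star,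
    re_im, imI_im, imJ_im, imK_im, hp, hq]
  ring

theorem inner_im_mul_right (hp : p.re = 0) (hq : q.re = 0) : ⟪(p * q).im, q⟫ = 0 := by
  simp only [inner_def, re_mul, imI_mul, imJ_mul, imK_mul, re_star, imI_star, imJ_star, imK_star,
    re_im, imI_im, imJ_im, imK_im, hp, hq]
  ring

theorem inner_self_im_mul (hp : p.re = 0) (hq : q.re = 0) :
    ⟪(p * q).im, (p * q).im⟫ = ⟪p, p⟫ * ⟪q, q⟫ - ⟪p, q⟫ ^ 2 := by
  simp only [inner_def, re_mul, imI_mul, imJ_mul, imK_mul, re_star, imI_star, imJ_star, imK_star,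
    re_im, imI_im, imJ_im, imK_im, hp, hq]
  ring

theorem exists_eq_smul_add_smul_add_smul_im_mul (hp : p.re = 0) (hq : q.re = 0) (hr : r.re = 0)
    (hpq : (p * q).im ≠ 0) : ∃ a b c : ℝ, r = a • p + b • q + c • (p * q).im := by
  set N := ⟪(p * q).im, (p * q).im⟫
  have hN : N ≠ 0 := by simpa [N, inner_self] using hpq
  have hexpand : N • r = (⟪q, q⟫ * ⟪r, p⟫ - ⟪p, q⟫ * ⟪r, q⟫) • p
      + (⟪p, p⟫ * ⟪r, q⟫ - ⟪p, q⟫ * ⟪r, p⟫) • q + ⟪r, (p * q).im⟫ • (p * q).im := by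
    simp only [N, inner_def]
    ext <;> simp only [re_add, imI_add, imJ_add, imK_add, re_smul, imI_smul, imJ_smul, imK_smul,
      smul_eq_mul, re_mul, imI_mul, imJ_mul, imK_mul, re_star, imI_star, imJ_star, imK_star,
      re_im, imI_im, imJ_im, imK_im, hp, hq, hr] <;> ring
  refine ⟨(⟪q, q⟫ * ⟪r, p⟫ - ⟪p, q⟫ * ⟪r, q⟫) / N, (⟪p, p⟫ * ⟪r, q⟫ - ⟪p, q⟫ * ⟪r, p⟫) / N,
    ⟪r, (p * q).im⟫ / N, ?_⟩
  rw [← (smul_right_injective ℍ hN).eq_iff, hexpand]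
  simp only [smul_add, smul_smul, mul_div_cancel₀ _ hN]

end Quaternion

section qmap

variable {A : Type*} [CommRing A] [Algebra ℝ A]

@[simp] theorem re_qmap (p : ℍ) : (qmap p : ℍ[A]).re = algebraMap ℝ A p.re := rfl
@[simp] theorem imI_qmap (p : ℍ) : (qmap p : ℍ[A]).imI = algebraMap ℝ A p.imI := rfl
@[simp] theorem imJ_qmap (p : ℍ) : (qmap p : ℍ[A]).imJ = algebraMap ℝ A p.imJ := rfl
@[simp] theorem imK_qmap (p : ℍ) : (qmap p : ℍ[A]).imK = algebraMap ℝ A p.imK := rfl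

theorem qmap_add (p q : ℍ) : (qmap (p + q) : ℍ[A]) = qmap p + qmap q := by
  ext <;> simp

theorem qmap_smul (a : ℝ) (p : ℍ) : (qmap (a • p) : ℍ[A]) = algebraMap ℝ A a • qmap p := by
  ext <;> simp [Algebra.smul_def]

theorem re_qmap_mul_star_qmap (p q : ℍ) :
    (qmap p * star (qmap q) : ℍ[A]).re = algebraMap ℝ A ⟪p, q⟫ := by
  simp [inner_def]

variable {p q : ℍ}

/-- Pairing a relation with `qmap r` under the `A`-bilinear form `re (x * star y)` gives real
inner products with `r`. The Gram matrix of `p, q, (p * q).im` is block diagonal, both blocks having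
determinant `|(p * q).im|²` (Lagrange's identity), a unit of `A`. -/
theorem linearIndependent_qmap (hp : p.re = 0) (hq : q.re = 0) (hpq : (p * q).im ≠ 0) :
    LinearIndependent A ![(qmap p : ℍ[A]), qmap q, qmap (p * q).im] := by
  rw [Fintype.linearIndependent_iff]
  intro g hg
  simp only [Fin.sum_univ_three, Matrix.cons_val_zero, Matrix.cons_val_one, Matrix.cons_val_two,
    Matrix.head_cons, Matrix.tail_cons] at hg
  have hpair (r : ℍ) : g 0 * algebraMap ℝ A ⟪p, r⟫ + g 1 * algebraMap ℝ A ⟪q, r⟫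
      + g 2 * algebraMap ℝ A ⟪(p * q).im, r⟫ = 0 := by
    have h := congrArg (fun v : ℍ[A] => (v * star (qmap r)).re) hg
    simp only [add_mul, smul_mul_assoc, re_add, re_smul, smul_eq_mul, re_qmap_mul_star_qmap,
      zero_mul, re_zero] at h
    exact h
  have hp' := hpair p
  have hq' := hpair q
  have hpq' := hpair (p * q).im
  rw [inner_im_mul_left hp hq, real_inner_comm p q] at hp'
  rw [inner_im_mul_right hp hq] at hq'
  rw [real_inner_comm, inner_im_mul_left hp hq, real_inner_comm, inner_im_mul_right hp hq,
    inner_self_im_mul hp hq] at hpq'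
  have hN : IsUnit (algebraMap ℝ A (⟪p, p⟫ * ⟪q, q⟫ - ⟪p, q⟫ ^ 2)) := by
    rw [← inner_self_im_mul hp hq, inner_self]
    exact (isUnit_iff_ne_zero.mpr (normSq_ne_zero.mpr hpq)).map _
  simp only [map_zero, mul_zero, add_zero, zero_add, map_sub, map_mul, map_pow] at hp' hq' hpq' hN
  intro i
  fin_cases i
  · show g 0 = 0
    exact hN.mul_left_eq_zero.mp
      (by linear_combination algebraMap ℝ A ⟪q, q⟫ * hp' - algebraMap ℝ A ⟪p, q⟫ * hq')
  · show g 1 = 0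
    exact hN.mul_left_eq_zero.mp
      (by linear_combination algebraMap ℝ A ⟪p, p⟫ * hq' - algebraMap ℝ A ⟪p, q⟫ * hp')
  · exact hN.mul_left_eq_zero.mp hpq'

theorem coe_add_coe_mul_qmap_mul_coe_add_coe_mul_qmap (hp : p.re = 0) (hq : q.re = 0)
    (f₀ f₁ h₀ h₁ : A) :
    ((f₀ : ℍ[A]) + (f₁ : ℍ[A]) * qmap p) * ((h₀ : ℍ[A]) + (h₁ : ℍ[A]) * qmap q) =
      ((f₀ * h₀ + f₁ * h₁ * algebraMap ℝ A (p * q).re : A) : ℍ[A])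
        + ((f₁ * h₀) • qmap p + (f₀ * h₁) • qmap q + (f₁ * h₁) • qmap (p * q).im) := by
  ext <;> simp only [re_add, imI_add, imJ_add, imK_add, re_smul, imI_smul, imJ_smul, imK_smul,
    smul_eq_mul, re_mul, imI_mul, imJ_mul, imK_mul, re_coe, imI_coe, imJ_coe, imK_coe, re_qmap,
    imI_qmap, imJ_qmap, imK_qmap, re_im, imI_im, imJ_im, imK_im, hp, hq, map_zero, map_add,
    map_sub, map_mul] <;> ring

theorem isSliced_coe_add_iff {K : ℍ} (hK : K.re = 0) (a : A) {v : ℍ[A]} (hv : v.re = 0) :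
    IsSliced K ((a : ℍ[A]) + v) ↔ ∃ c : A, v = c • qmap K := by
  simp only [IsSliced, coe_mul_eq_smul]
  constructor
  · rintro ⟨a', c, h⟩
    have hre : a = a' := by simpa [hv, hK] using congrArg QuaternionAlgebra.re h
    exact ⟨c, by rw [hre] at h; exact add_left_cancel h⟩
  · rintro ⟨c, rfl⟩
    exact ⟨a, c, rfl⟩

theorem smul_qmap_add_eq_smul_qmap_iff (hp : p.re = 0) (hq : q.re = 0) (hpq : (p * q).im ≠ 0)
    (x y z c : A) (a b ε : ℝ) :
    x • (qmap p : ℍ[A]) + y • qmap q + z • qmap (p * q).im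
        = c • qmap (a • p + b • q + ε • (p * q).im) ↔
      x = c * algebraMap ℝ A a ∧ y = c * algebraMap ℝ A b ∧ z = c * algebraMap ℝ A ε := by
  simp only [qmap_add, qmap_smul, smul_add, smul_smul]
  constructor
  · intro h
    have hcoeff := Fintype.linearIndependent_iff.mp (linearIndependent_qmap hp hq hpq)
      ![x - c * algebraMap ℝ A a, y - c * algebraMap ℝ A b, z - c * algebraMap ℝ A ε]
      (by simp only [Fin.sum_univ_three, Matrix.cons_val_zero, Matrix.cons_val_one,
            Matrix.cons_val_two, Matrix.head_cons, Matrix.tail_cons, sub_smul]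
          linear_combination (norm := module) h)
    exact ⟨sub_eq_zero.mp (hcoeff 0), sub_eq_zero.mp (hcoeff 1), sub_eq_zero.mp (hcoeff 2)⟩
  · rintro ⟨rfl, rfl, rfl⟩
    rfl

end qmap

theorem star_product_one_slice_preserving {A : Type*} [CommRing A] [IsDomain A] [Algebra ℝ A]
    (I₀ J₀ K₀ : Quaternion ℝ)
    (hI₀ : IsImaginaryUnit I₀) (hJ₀ : IsImaginaryUnit J₀) (hK₀ : IsImaginaryUnit K₀)
    (hind : LinearIndependent ℝ ![I₀, J₀])
    (f₀ f₁ h₀ h₁ : A) (hf₁ : f₁ ≠ 0) (hh₁ : h₁ ≠ 0)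
    (f h : Quaternion A)
    (hf : f = (f₀ : Quaternion A) + (f₁ : Quaternion A) * qmap I₀)
    (hh : h = (h₀ : Quaternion A) + (h₁ : Quaternion A) * qmap J₀) :
    IsSliced K₀ (f * h) ↔
      ∃ a b ε : ℝ, ε ≠ 0 ∧
        K₀ = a • I₀ + b • J₀ + ε • ((2 : ℝ)⁻¹ • (I₀ * J₀ - J₀ * I₀)) ∧
        algebraMap ℝ A ε * f₀ = algebraMap ℝ A b * f₁ ∧
        algebraMap ℝ A ε * h₀ = algebraMap ℝ A a * h₁ := by
  have hIJ := im_mul_ne_zero_of_linearIndependent hI₀.1 hind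
  subst hf hh
  rw [inv_two_smul_commutator_eq_im_mul hI₀.1 hJ₀.1,
    coe_add_coe_mul_qmap_mul_coe_add_coe_mul_qmap hI₀.1 hJ₀.1,
    isSliced_coe_add_iff hK₀.1 _ (by simp [hI₀.1, hJ₀.1])]
  constructor
  · rintro ⟨c, hc⟩
    obtain ⟨a, b, ε, rfl⟩ := exists_eq_smul_add_smul_add_smul_im_mul hI₀.1 hJ₀.1 hK₀.1 hIJ
    obtain ⟨ha, hb, hε⟩ := (smul_qmap_add_eq_smul_qmap_iff hI₀.1 hJ₀.1 hIJ ..).mp hc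
    have hcε : c * algebraMap ℝ A ε ≠ 0 := hε ▸ mul_ne_zero hf₁ hh₁
    have hc : c ≠ 0 := left_ne_zero_of_mul hcε
    refine ⟨a, b, ε, fun hε0 => right_ne_zero_of_mul hcε (by simp [hε0]), rfl, ?_, ?_⟩
    · exact mul_left_cancel₀ hc (by linear_combination f₁ * hb - f₀ * hε)
    · exact mul_left_cancel₀ hc (by linear_combination h₁ * ha - h₀ * hε)
  · rintro ⟨a, b, ε, hε, rfl, hfε, hhε⟩
    have hinv : algebraMap ℝ A ε⁻¹ * algebraMap ℝ A ε = 1 := by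
      rw [← map_mul, inv_mul_cancel₀ hε, map_one]
    refine ⟨algebraMap ℝ A ε⁻¹ * (f₁ * h₁),
      (smul_qmap_add_eq_smul_qmap_iff hI₀.1 hJ₀.1 hIJ ..).mpr ⟨?_, ?_, ?_⟩⟩
    · linear_combination algebraMap ℝ A ε⁻¹ * f₁ * hhε - f₁ * h₀ * hinv
    · linear_combination algebraMap ℝ A ε⁻¹ * h₁ * hfε - f₀ * h₁ * hinv
    · linear_combination -(f₁ * h₁) * hinv
end

section
/- Let A be a formally real integral domain which is an ℝ-algebra. Let I₀ be an imaginary unit, let h = h₀ + h₁·ι(I₀) with h₀, h₁ ∈ A and h₁ ≠ 0, and let f ∈ Quaternion A be not I₀-sliced. Then h * f * star h is not I₀-sliced. (Claim established in the proof of Theorem 5.6: when the conjugator h preserves the slice ℂ_{I₀} and f does not, the case ℂ_{I₀} = ℂ_{M₀} cannot occur.) -/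
open Quaternion

/-- The vector parts of `I` and `M` are orthogonal in `ℝ³`. -/
def OrthIm (I M : Quaternion ℝ) : Prop :=
  I.imI * M.imI + I.imJ * M.imJ + I.imK * M.imK = 0

/-- `A` is formally real: a sum of four squares vanishes only trivially. -/
def FormallyRealFour (A : Type*) [CommRing A] : Prop :=
  ∀ a b c d : A, a ^ 2 + b ^ 2 + c ^ 2 + d ^ 2 = 0 → a = 0 ∧ b = 0 ∧ c = 0 ∧ d = 0

lemma normSq_ne_zero_of_formallyRealFour {A : Type*} [CommRing A] (hFR : FormallyRealFour A)
    {q : ℍ[A]} (hq : q ≠ 0) : normSq q ≠ 0 := by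
  intro h0
  obtain ⟨h1, h2, h3, h4⟩ := hFR _ _ _ _ (by rwa [normSq_def'] at h0)
  exact hq (by ext <;> assumption)

lemma star_mul_mul_mul_star_mul {A : Type*} [CommRing A] (h f : ℍ[A]) :
    star h * (h * f * star h) * h = normSq h ^ 2 • f := by
  calc star h * (h * f * star h) * h = star h * h * f * (star h * h) := by simp only [mul_assoc]
    _ = normSq h * f * normSq h := by rw [Quaternion.star_mul_self]
    _ = _ := by
      rw [mul_assoc, ← coe_commutes, ← mul_assoc, ← coe_mul, ← sq,
        coe_mul_eq_smul]

section Sliced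

variable {A : Type*} [CommRing A] [Algebra ℝ A] {I : ℍ[ℝ]}

@[simp] lemma qmap_re (q : ℍ[ℝ]) : (qmap q : ℍ[A]).re = algebraMap ℝ A q.re := rfl
@[simp] lemma qmap_imI (q : ℍ[ℝ]) : (qmap q : ℍ[A]).imI = algebraMap ℝ A q.imI := rfl
@[simp] lemma qmap_imJ (q : ℍ[ℝ]) : (qmap q : ℍ[A]).imJ = algebraMap ℝ A q.imJ := rfl
@[simp] lemma qmap_imK (q : ℍ[ℝ]) : (qmap q : ℍ[A]).imK = algebraMap ℝ A q.imK := rfl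

lemma qmap_mul (p q : ℍ[ℝ]) : (qmap (p * q) : ℍ[A]) = qmap p * qmap q := by
  ext <;> simp [re_mul, imI_mul, imJ_mul, imK_mul]

lemma qmap_neg_one : (qmap (-1) : ℍ[A]) = -1 := by
  ext <;> simp

namespace IsImaginaryUnit

variable (hI : IsImaginaryUnit I)
include hI

lemma qmap_mul_self : (qmap I : ℍ[A]) * qmap I = -1 := by
  rw [← qmap_mul, ← sq, hI.2, qmap_neg_one]

lemma star_qmap : star (qmap I : ℍ[A]) = -qmap I := by
  ext <;> simp [hI.1]

lemma sum_sq_algebraMap_im :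
    algebraMap ℝ A I.imI ^ 2 + algebraMap ℝ A I.imJ ^ 2 + algebraMap ℝ A I.imK ^ 2 = 1 := by
  have := congrArg QuaternionAlgebra.re (hI.qmap_mul_self (A := A))
  simp only [re_mul, qmap_re, qmap_imI, qmap_imJ, qmap_imK, hI.1, map_zero,
    re_neg, re_one] at this
  linear_combination -this

end IsImaginaryUnit

lemma coe_add_mul_qmap_mul (hI : IsImaginaryUnit I) (a b c d : A) :
    ((a : ℍ[A]) + (b : ℍ[A]) * qmap I) * ((c : ℍ[A]) + (d : ℍ[A]) * qmap I) =
      ((a * c - b * d : A) : ℍ[A]) + ((a * d + b * c : A) : ℍ[A]) * qmap I := by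
  set J : ℍ[A] := qmap I
  have hc : J * c = c * J := (coe_commutes c J).symm
  have hd : J * d = d * J := (coe_commutes d J).symm
  simp only [coe_sub, coe_add, coe_mul]
  calc ((a : ℍ[A]) + b * J) * (c + d * J)
        = a * c + a * d * J + b * (J * c) + b * (J * d) * J := by noncomm_ring
    _ = a * c + a * d * J + b * c * J + b * d * (J * J) := by rw [hc, hd]; noncomm_ring
    _ = _ := by rw [hI.qmap_mul_self]; noncomm_ring

lemma star_coe_add_mul_qmap (hI : IsImaginaryUnit I) (a b : A) :
    star ((a : ℍ[A]) + (b : ℍ[A]) * qmap I) = (a : ℍ[A]) + ((-b : A) : ℍ[A]) * qmap I := by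
  rw [star_add, star_mul, star_coe, star_coe, hI.star_qmap,
    ← coe_commutes, coe_neg, neg_mul, mul_neg]

lemma IsSliced.mul (hI : IsImaginaryUnit I) {p q : ℍ[A]} (hp : IsSliced I p)
    (hq : IsSliced I q) : IsSliced I (p * q) := by
  obtain ⟨a, b, rfl⟩ := hp
  obtain ⟨c, d, rfl⟩ := hq
  exact ⟨_, _, coe_add_mul_qmap_mul hI a b c d⟩

lemma IsSliced.star (hI : IsImaginaryUnit I) {q : ℍ[A]} (hq : IsSliced I q) :
    IsSliced I (star q) := by
  obtain ⟨a, b, rfl⟩ := hq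
  exact ⟨_, _, star_coe_add_mul_qmap hI a b⟩

/-- The coefficient of `ι(I)` in `q`, when `q` is `I`-sliced. -/
def sliceIm (I : ℍ[ℝ]) (q : ℍ[A]) : A :=
  q.imI * algebraMap ℝ A I.imI + q.imJ * algebraMap ℝ A I.imJ + q.imK * algebraMap ℝ A I.imK

lemma sliceIm_smul (c : A) (q : ℍ[A]) : sliceIm I (c • q) = c * sliceIm I q := by
  simp only [sliceIm, imI_smul, imJ_smul, imK_smul, smul_eq_mul]
  ring

lemma sliceIm_coe_add_mul_qmap (hI : IsImaginaryUnit I) (a b : A) :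
    sliceIm I ((a : ℍ[A]) + (b : ℍ[A]) * qmap I) = b := by
  simp only [sliceIm, imI_add, imI_coe, imI_mul, re_coe, qmap_imI, qmap_re, zero_mul, add_zero,
    imJ_coe, qmap_imK, imK_coe, qmap_imJ, sub_zero, zero_add, imJ_add, imJ_mul, imK_add, imK_mul]
  linear_combination b * hI.sum_sq_algebraMap_im (A := A)

lemma isSliced_iff (hI : IsImaginaryUnit I) {q : ℍ[A]} :
    IsSliced I q ↔ q = (q.re : ℍ[A]) + ((sliceIm I q : A) : ℍ[A]) * qmap I := by
  refine ⟨?_, fun hq => ⟨_, _, hq⟩⟩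
  rintro ⟨a, b, rfl⟩
  rw [sliceIm_coe_add_mul_qmap hI]
  simp [hI.1]

lemma IsSliced.of_smul [IsDomain A] (hI : IsImaginaryUnit I) {c : A} (hc : c ≠ 0) {q : ℍ[A]}
    (hcq : IsSliced I (c • q)) : IsSliced I q := by
  rw [isSliced_iff hI] at hcq ⊢
  rw [re_smul, sliceIm_smul, smul_eq_mul, coe_mul, coe_mul,
    mul_assoc, ← mul_add, coe_mul_eq_smul] at hcq
  exact (smul_right_inj hc).1 hcq

lemma isSliced_of_mul_mul_star [IsDomain A] (hFR : FormallyRealFour A) (hI : IsImaginaryUnit I)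
    {h f : ℍ[A]} (hh : IsSliced I h) (hne : h ≠ 0) (hconj : IsSliced I (h * f * star h)) :
    IsSliced I f := by
  have hsliced : IsSliced I (star h * (h * f * star h) * h) := ((hh.star hI).mul hI hconj).mul hI hh
  rw [star_mul_mul_mul_star_mul] at hsliced
  exact hsliced.of_smul hI (pow_ne_zero 2 (normSq_ne_zero_of_formallyRealFour hFR hne))

end Sliced

theorem conjugation_by_sliced_not_sliced
    {A : Type*} [CommRing A] [IsDomain A] [Algebra ℝ A] (hFR : FormallyRealFour A)
    (I₀ : Quaternion ℝ) (hI₀ : IsImaginaryUnit I₀)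
    (h₀ h₁ : A) (hh₁ : h₁ ≠ 0) (h : Quaternion A)
    (hh : h = (h₀ : Quaternion A) + (h₁ : Quaternion A) * qmap I₀)
    (f : Quaternion A) (hf : ¬ IsSliced I₀ f) :
    ¬ IsSliced I₀ (h * f * star h) := by
  have hne : h ≠ 0 := by
    rintro rfl
    apply hh₁
    rw [← sliceIm_coe_add_mul_qmap hI₀ h₀ h₁, ← hh]
    simp [sliceIm]
  exact fun hconj => hf (isSliced_of_mul_mul_star hFR hI₀ ⟨h₀, h₁, hh⟩ hne hconj)
end
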